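/- arXiv:1011.5384 — 3 statements merged into one kernel-verified Lean document; each statement's English description precedes it below -/
import Mathlib

section
/- Every spatial congestion game with exactly two resources, an undirected interference graph, and non-increasing user-specific payoff functions has the finite improvement property: there is no infinite sequence of asynchronous strict improvement steps; equivalently no sequence of strict improvement steps returns to its starting strategy profile. -/
open scoped Classical

/-- Number of neighbors of `i` in `G` choosing resource `r` under profile `σ`. -/
noncomputable def nbrCount {ι : Type*} [Fintype ι]
    (G : SimpleGraph ι) (σ : ι → Bool) (i : ι) (r : Bool) : ℕ :=
  (Finset.univ.filter (fun j => G.Adj i j ∧ σ j = r)).card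

/-- Payoff of player `i` in the two-resource spatial congestion game. -/
noncomputable def scgPayoff {ι : Type*} [Fintype ι]
    (G : SimpleGraph ι) (g : ι → Bool → ℕ → ℤ) (σ : ι → Bool) (i : ι) : ℤ :=
  g i (σ i) (nbrCount G σ i (σ i) + 1)

/-- A strict improvement step: one player unilaterally changes its resource and strictly
increases its payoff. -/
def Improves {ι : Type*} [Fintype ι]
    (G : SimpleGraph ι) (g : ι → Bool → ℕ → ℤ) (σ σ' : ι → Bool) : Prop :=
  ∃ i : ι, (∀ j, j ≠ i → σ' j = σ j) ∧ scgPayoff G g σ i < scgPayoff G g σ' i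

/-!
Since payoffs are non-increasing, the gain of `true` over `false` for player `i` is
non-increasing in the number `k` of neighbours of `i` on `true`. So there is a threshold `τᵢ`
such that `i` can only improve by moving to `true` if `k < τᵢ`, and by moving to `false` if
`τᵢ ≤ k`. Then `Φ σ = 2 · #{edges inside the true class} + ∑_{σ i = true} (1 - 2 τᵢ)` changes
by the odd number `±(2k + 1 - 2τᵢ)` when `i` moves, and strictly decreases along every
improvement step. On the finite set of profiles this excludes infinite improvement paths
and improvement cycles.
-/

open Finset Function

theorem Antitone.lt_card_filter {p : ℕ → Prop} [DecidablePred p] (hp : Antitone p)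
    {n k : ℕ} (hk : k < n) (h : p k) : k < #{m ∈ range n | p m} := by
  have hsub : range (k + 1) ⊆ {m ∈ range n | p m} := fun m hm => by
    rw [mem_range] at hm
    exact mem_filter.2 ⟨mem_range.2 (by omega), hp (Nat.le_of_lt_succ hm) h⟩
  simpa using card_le_card hsub

theorem Antitone.card_filter_le {p : ℕ → Prop} [DecidablePred p] (hp : Antitone p)
    {n k : ℕ} (h : ¬ p k) : #{m ∈ range n | p m} ≤ k := by
  have hsub : {m ∈ range n | p m} ⊆ range k := fun m hm => by
    rw [mem_filter] at hm
    by_contra hmk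
    exact h (hp (by simpa using hmk) hm.2)
  simpa using card_le_card hsub

section SpatialCongestionGame

variable {ι : Type*} [Fintype ι] (G : SimpleGraph ι)

theorem nbrCount_congr {σ σ' : ι → Bool} {i : ι} (h : ∀ j, j ≠ i → σ' j = σ j) (r : Bool) :
    nbrCount G σ' i r = nbrCount G σ i r := by
  unfold nbrCount
  congr 1
  refine filter_congr fun j _ => ?_
  by_cases hj : j = i
  · subst hj; simp
  · rw [h j hj]

theorem nbrCount_true_add_false (σ : ι → Bool) (i : ι) :
    nbrCount G σ i true + nbrCount G σ i false = G.degree i := by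
  rw [← G.card_neighborFinset_eq_degree, G.neighborFinset_eq_filter, nbrCount, nbrCount,
    ← card_filter_add_card_filter_not (s := {w | G.Adj i w}) (fun j => σ j = true),
    filter_filter, filter_filter]
  simp only [Bool.not_eq_true]

theorem nbrCount_eq_sum (σ : ι → Bool) (i : ι) (r : Bool) :
    (nbrCount G σ i r : ℤ) = ∑ j, if G.Adj i j ∧ σ j = r then 1 else 0 := by
  simp only [nbrCount, card_filter, Nat.cast_sum, Nat.cast_ite, Nat.cast_one, Nat.cast_zero]

theorem nbrCount_update_false (σ : ι → Bool) (i j : ι) :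
    (nbrCount G σ j true : ℤ) =
      nbrCount G (update σ i false) j true + if G.Adj j i ∧ σ i = true then 1 else 0 := by
  rw [nbrCount_eq_sum, nbrCount_eq_sum,
    ← Fintype.sum_ite_eq' i fun _ => if G.Adj j i ∧ σ i = true then (1 : ℤ) else 0,
    ← sum_add_distrib]
  refine sum_congr rfl fun l _ => ?_
  by_cases hl : l = i
  · subst hl; simp
  · simp [hl]

variable (g : ι → Bool → ℕ → ℤ)

/-- What player `i` gains by choosing `true` rather than `false` when `k` of its neighbours
choose `true`. -/
noncomputable def gain (i : ι) (k : ℕ) : ℤ :=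
  g i true (k + 1) - g i false (G.degree i - k + 1)

theorem gain_pos_antitone (hg : ∀ i r, Antitone (g i r)) (i : ι) :
    Antitone fun k => 0 < gain G g i k := by
  intro j k hjk hk
  refine hk.trans_le ?_
  have htrue := hg i true (show j + 1 ≤ k + 1 by omega)
  have hfalse := hg i false (show G.degree i - k + 1 ≤ G.degree i - j + 1 by omega)
  simp only [gain]
  omega

noncomputable def threshold (i : ι) : ℕ :=
  #{k ∈ range (G.degree i + 1) | 0 < gain G g i k}

noncomputable def potential (σ : ι → Bool) : ℤ :=
  ∑ i, if σ i = true then (nbrCount G σ i true : ℤ) + 1 - 2 * threshold G g i else 0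

theorem potential_sub_update_false (σ : ι → Bool) (i : ι) :
    potential G g σ - potential G g (update σ i false) =
      if σ i = true then 2 * (nbrCount G σ i true : ℤ) + 1 - 2 * threshold G g i else 0 := by
  cases hi : σ i
  · simp [← hi]
  have hterm : ∀ j,
      ((if σ j = true then (nbrCount G σ j true : ℤ) + 1 - 2 * threshold G g j else 0) -
        if update σ i false j = true then
          (nbrCount G (update σ i false) j true : ℤ) + 1 - 2 * threshold G g j else 0) =
      (if j = i then (nbrCount G σ i true : ℤ) + 1 - 2 * threshold G g i else 0) +
        if G.Adj i j ∧ σ j = true then 1 else 0 := by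
    intro j
    by_cases hj : j = i
    · subst hj; simp [hi]
    · have := nbrCount_update_false G σ i j
      rw [update_of_ne hj]
      by_cases hσj : σ j = true
      · simp only [hσj, hj, if_true, if_false, hi, and_true, G.adj_comm] at this ⊢
        omega
      · simp [hσj, hj]
  rw [potential, potential, ← sum_sub_distrib, sum_congr rfl fun j _ => hterm j,
    sum_add_distrib, Fintype.sum_ite_eq', ← nbrCount_eq_sum]
  simp only [if_true]
  ring

theorem potential_lt_of_improves (hg : ∀ i r, Antitone (g i r)) {σ σ' : ι → Bool}
    (h : Improves G g σ σ') : potential G g σ' < potential G g σ := by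
  obtain ⟨i, hfix, himp⟩ := h
  have hbase : update σ' i false = update σ i false := by
    funext j
    by_cases hj : j = i
    · subst hj; simp
    · simp [update_of_ne hj, hfix j hj]
  have hnbr := nbrCount_congr G hfix
  have hσ := potential_sub_update_false G g σ i
  have hσ' := potential_sub_update_false G g σ' i
  rw [hbase, hnbr] at hσ'
  simp only [scgPayoff, hnbr] at himp
  have hdeg := nbrCount_true_add_false G σ i
  have hfalse : nbrCount G σ i false = G.degree i - nbrCount G σ i true := by omega
  have hD := gain_pos_antitone G g hg i
  cases hi : σ i <;> cases hi' : σ' i <;>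
    simp only [hi, hi', hfalse, if_true, Bool.false_eq_true, if_false] at himp hσ hσ'
  · exact (lt_irrefl _ himp).elim
  · have hgain : 0 < gain G g i (nbrCount G σ i true) := by rw [gain]; omega
    have : nbrCount G σ i true < threshold G g i := by
      unfold threshold
      exact hD.lt_card_filter (n := G.degree i + 1) (by omega) hgain
    omega
  · have hgain : ¬ 0 < gain G g i (nbrCount G σ i true) := by rw [gain]; omega
    have : threshold G g i ≤ nbrCount G σ i true := by
      unfold threshold
      exact hD.card_filter_le hgain
    omega
  · exact (lt_irrefl _ himp).elim

end SpatialCongestionGame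

/-- Every spatial congestion game with exactly two resources, an undirected interference
graph and non-increasing user-specific payoff functions has the finite improvement property:
there is no infinite sequence of strict improvement steps, and equivalently no finite
sequence of strict improvement steps returns to its starting profile. -/
theorem fip_two_resources {ι : Type*} [Fintype ι] (G : SimpleGraph ι)
    (g : ι → Bool → ℕ → ℤ) (hg : ∀ i r, Antitone (g i r)) :
    (¬ ∃ f : ℕ → (ι → Bool), ∀ n, Improves G g (f n) (f (n + 1))) ∧
    (¬ ∃ (T : ℕ) (f : ℕ → (ι → Bool)), 0 < T ∧ f 0 = f T ∧
        ∀ t < T, Improves G g (f t) (f (t + 1))) := by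
  have hdesc {σ σ'} : Improves G g σ σ' → potential G g σ' < potential G g σ :=
    potential_lt_of_improves G g hg
  constructor
  · rintro ⟨f, hf⟩
    have hanti : StrictAnti (potential G g ∘ f) :=
      strictAnti_nat_of_succ_lt fun n => hdesc (hf n)
    obtain ⟨m, n, hmn, heq⟩ := Finite.exists_ne_map_eq_of_infinite f
    exact hmn (hanti.injective (congrArg (potential G g) heq))
  · rintro ⟨T, f, hT, hcycle, hf⟩
    have hanti : StrictAntiOn (potential G g ∘ f) (Set.Iic T) :=
      strictAntiOn_Iic_of_succ_lt fun t ht => hdesc (hf t ht)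
    have := hanti (Set.mem_Iic.2 T.zero_le) Set.self_mem_Iic hT
    simp [hcycle] at this
end

section
/- If the interference graph is d-regular and bipartite, and payoff functions are non-user-specific and non-increasing, then the spatial congestion game has a pure strategy Nash equilibrium. Specifically: order resources so g_1(1) ≥ g_2(1) ≥ ... ≥ g_R(1); if g_1(d+1) ≥ g_2(1) then all players choosing resource 1 is an equilibrium; otherwise the proper 2-coloring of the bipartite graph using resources 1 and 2 is an equilibrium. -/
open scoped Classical

/-- Number of neighbors of `i` in `G` choosing resource `r` under profile `σ`. -/
noncomputable def cnt {ι R : Type*} [Fintype ι]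
    (G : SimpleGraph ι) (σ : ι → R) (i : ι) (r : R) : ℕ :=
  (Finset.univ.filter (fun j => G.Adj i j ∧ σ j = r)).card

/-- Pure strategy Nash equilibrium with non-user-specific payoff functions. -/
def IsNE {ι R : Type*} [Fintype ι]
    (G : SimpleGraph ι) (g : R → ℕ → ℤ) (σ : ι → R) : Prop :=
  ∀ (i : ι) (r : R), g r (cnt G σ i r + 1) ≤ g (σ i) (cnt G σ i (σ i) + 1)

lemma cnt_of_adj_const {ι R : Type*} [Fintype ι] {d : ℕ}
    (G : SimpleGraph ι) (hreg : G.IsRegularOfDegree d) (σ : ι → R) (i : ι) (c : R)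
    (hadj : ∀ j, G.Adj i j → σ j = c) (r : R) :
    cnt G σ i r = if c = r then d else 0 := by
  unfold cnt
  have hfc : Finset.univ.filter (fun j => G.Adj i j ∧ σ j = r)
      = Finset.univ.filter (fun j => G.Adj i j ∧ c = r) := by
    apply Finset.filter_congr
    intro j _
    constructor
    · rintro ⟨h1, h2⟩; exact ⟨h1, (hadj j h1) ▸ h2⟩
    · rintro ⟨h1, h2⟩; exact ⟨h1, (hadj j h1).trans h2⟩
  rw [hfc]
  split_ifs with h
  · simp only [h, and_true]
    rw [← SimpleGraph.neighborFinset_eq_filter]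
    exact hreg i
  · simp [h]

/-- If the interference graph is `d`-regular and bipartite and the payoff functions are
non-user-specific and non-increasing, with resources ordered so that
`g_1(1) ≥ g_2(1) ≥ ... ≥ g_R(1)`, then a pure Nash equilibrium exists. Specifically, if
`g_1(d+1) ≥ g_2(1)` then everyone choosing resource `1` is an equilibrium; otherwise the
proper 2-coloring of the bipartite graph with resources `1` and `2` is an equilibrium. -/
theorem regular_bipartite_NE {ι : Type*} [Fintype ι]
    (G : SimpleGraph ι) (d R : ℕ) (hR : 2 ≤ R)
    (hreg : G.IsRegularOfDegree d)
    (col : ι → Bool) (hcol : ∀ i j, G.Adj i j → col i ≠ col j)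
    (g : Fin R → ℕ → ℤ) (hg : ∀ r, Antitone (g r))
    (hord : ∀ r r' : Fin R, r ≤ r' → g r' 1 ≤ g r 1) :
    (∃ σ : ι → Fin R, IsNE G g σ) ∧
    (g ⟨1, by omega⟩ 1 ≤ g ⟨0, by omega⟩ (d + 1) →
      IsNE G g (fun _ => (⟨0, by omega⟩ : Fin R))) ∧
    (g ⟨0, by omega⟩ (d + 1) < g ⟨1, by omega⟩ 1 →
      IsNE G g (fun i => if col i then (⟨0, by omega⟩ : Fin R) else ⟨1, by omega⟩)) := by
  set r0 : Fin R := ⟨0, by omega⟩ with hr0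
  set r1 : Fin R := ⟨1, by omega⟩ with hr1
  have hr01 : r0 ≤ r1 := by simp [hr0, hr1, Fin.le_def]
  have h0le : ∀ r : Fin R, r0 ≤ r := by
    intro r; simp [hr0, Fin.le_def]
  have h1le : ∀ r : Fin R, r ≠ r0 → r1 ≤ r := by
    intro r hr
    have : r.val ≠ 0 := by
      intro h; apply hr; apply Fin.ext; simpa [hr0] using h
    simp only [hr1, Fin.le_def]; omega
  have NE1 : g r1 1 ≤ g r0 (d + 1) → IsNE G g (fun _ => r0) := by
    intro hle i r
    have hc := cnt_of_adj_const G hreg (fun _ => r0) i r0 (fun _ _ => rfl)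
    rw [hc, hc, if_pos rfl]
    split_ifs with h
    · subst h; exact le_refl _
    · calc g r (0 + 1) ≤ g r1 1 := hord r1 r (h1le r (fun hh => h hh.symm))
        _ ≤ g r0 (d + 1) := hle
  have NE2 : g r0 (d + 1) < g r1 1 →
      IsNE G g (fun i => if col i then r0 else r1) := by
    intro hlt i r
    set σ2 : ι → Fin R := fun i => if col i then r0 else r1 with hσ2
    have hc := cnt_of_adj_const G hreg σ2 i (if col i then r1 else r0)
      (by
        intro j hj
        have hne := hcol i j hj
        simp only [hσ2]
        cases hci : col i <;> cases hcj : col j <;> simp_all)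
    cases hci : col i with
    | true =>
      have hσi : σ2 i = r0 := by simp [hσ2, hci]
      rw [hσi, hc, hc]
      simp only [hci, if_true]
      have hr10 : r1 ≠ r0 := by
        intro h; have := congrArg Fin.val h; simp [hr0, hr1] at this
      rw [if_neg hr10]
      split_ifs with h
      · subst h
        calc g r1 (d + 1) ≤ g r1 1 := hg r1 (by omega)
          _ ≤ g r0 1 := hord r0 r1 hr01
      · exact hord r0 r (h0le r)
    | false =>
      have hσi : σ2 i = r1 := by simp [hσ2, hci]
      rw [hσi, hc, hc]
      simp only [hci, if_false, Bool.false_eq_true]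
      have hr01' : r0 ≠ r1 := by
        intro h; have := congrArg Fin.val h; simp [hr0, hr1] at this
      rw [if_neg hr01']
      split_ifs with h
      · subst h
        exact le_of_lt hlt
      · exact hord r1 r (h1le r (fun hh => h hh.symm))
  refine ⟨?_, NE1, NE2⟩
  by_cases hcase : g r1 1 ≤ g r0 (d + 1)
  · exact ⟨_, NE1 hcase⟩
  · exact ⟨_, NE2 (lt_of_not_ge hcase)⟩
end

section
/- Pair-counting lemma: In a cyclic sequence of strict improvement steps in a two-resource spatial congestion game that starts and ends at the same strategy profile, for any pair of adjacent players A and B, the number of times they appear in each other's same-same sets (SS, on the left-hand sides of the reverse-change inequalities) equals the number of times they appear in each other's opposite-opposite sets (OO, on the right-hand sides). -/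
open scoped Classical

/-- The times `t < T` at which player `i` changes its resource. -/
noncomputable def changeTimes {ι : Type*} (f : ℕ → ι → Bool) (T : ℕ) (i : ι) : Finset ℕ :=
  (Finset.range T).filter (fun t => f (t + 1) i ≠ f t i)

/-- The change time of player `i` cyclically following time `t` (within the loop `[0, T)`). -/
noncomputable def nextChange {ι : Type*} (f : ℕ → ι → Bool) (T : ℕ) (i : ι) (t : ℕ) : ℕ :=
  if h : ((changeTimes f T i).filter (fun s => t < s)).Nonempty then
    ((changeTimes f T i).filter (fun s => t < s)).min' h
  else if h2 : (changeTimes f T i).Nonempty then (changeTimes f T i).min' h2 else 0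

lemma transitions (α : ℕ → Prop) (T : ℕ) :
    ((Finset.range T).filter (fun t => α t ∧ ¬ α (t+1))).card
      + (if α T then 1 else 0)
    = ((Finset.range T).filter (fun t => ¬ α t ∧ α (t+1))).card
      + (if α 0 then 1 else 0) := by
  induction T with
  | zero => simp
  | succ T ih =>
    rw [Finset.range_add_one, Finset.filter_insert, Finset.filter_insert]
    have hT : ∀ p : ℕ → Prop, T ∉ (Finset.range T).filter p := by
      intro p h
      exact absurd (Finset.mem_of_mem_filter _ h) (by simp)
    by_cases h1 : α T <;> by_cases h2 : α (T+1)
    · rw [if_neg (show ¬(α T ∧ ¬ α (T+1)) from fun h => h.2 h2),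
        if_neg (show ¬(¬ α T ∧ α (T+1)) from fun h => h.1 h1), if_pos h2]
      rw [if_pos h1] at ih
      omega
    · rw [if_pos (show α T ∧ ¬ α (T+1) from ⟨h1, h2⟩),
        if_neg (show ¬(¬ α T ∧ α (T+1)) from fun h => h.1 h1), if_neg h2,
        Finset.card_insert_of_notMem (by simp)]
      rw [if_pos h1] at ih
      omega
    · rw [if_neg (show ¬(α T ∧ ¬ α (T+1)) from fun h => h1 h.1),
        if_pos (show ¬ α T ∧ α (T+1) from ⟨h1, h2⟩), if_pos h2,
        Finset.card_insert_of_notMem (by simp)]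
      rw [if_neg h1] at ih
      omega
    · rw [if_neg (show ¬(α T ∧ ¬ α (T+1)) from fun h => h1 h.1),
        if_neg (show ¬(¬ α T ∧ α (T+1)) from fun h => h2 h.2), if_neg h2]
      rw [if_neg h1] at ih
      omega

lemma bool_flip1 : ∀ a b a' b' : Bool, a' ≠ a → b' = b → ¬ ((b' = a') ↔ (b = a)) := by decide
lemma bool_flip2 : ∀ a b a' b' : Bool, a' = a → b' ≠ b → ¬ ((b' = a') ↔ (b = a)) := by decide
lemma bool_same : ∀ a b a' b' : Bool, a' = a → b' = b → ((b' = a') ↔ (b = a)) := by decide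

lemma nextChange_mem {ι : Type*} (f : ℕ → ι → Bool) (T : ℕ) (i : ι) {t : ℕ}
    (ht : t ∈ changeTimes f T i) : nextChange f T i t ∈ changeTimes f T i := by
  unfold nextChange
  split_ifs with h1 h2
  · exact Finset.mem_of_mem_filter _ ((Finset.filter _ _).min'_mem h1)
  · exact (changeTimes f T i).min'_mem h2
  · exact absurd ⟨t, ht⟩ h2

lemma nextChange_injOn {ι : Type*} (f : ℕ → ι → Bool) (T : ℕ) (i : ι) :
    Set.InjOn (nextChange f T i) ↑(changeTimes f T i) := by
  set S := changeTimes f T i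
  have key : ∀ s t, s ∈ S → t ∈ S → s < t → nextChange f T i s ≠ nextChange f T i t := by
    intro s t hs ht hlt
    have hs' : (S.filter (fun u => s < u)).Nonempty := ⟨t, Finset.mem_filter.2 ⟨ht, hlt⟩⟩
    have hns : nextChange f T i s = (S.filter (fun u => s < u)).min' hs' := dif_pos hs'
    by_cases h : (S.filter (fun u => t < u)).Nonempty
    · have hnt : nextChange f T i t = (S.filter (fun u => t < u)).min' h := dif_pos h
      have h1 : nextChange f T i s ≤ t := by
        rw [hns]; exact Finset.min'_le _ _ (Finset.mem_filter.2 ⟨ht, hlt⟩)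
      have h2 : t < nextChange f T i t := by
        rw [hnt]
        exact (Finset.mem_filter.1 ((S.filter (fun u => t < u)).min'_mem h)).2
      omega
    · have hS : S.Nonempty := ⟨t, ht⟩
      have hnt : nextChange f T i t = S.min' hS := by
        unfold nextChange
        rw [dif_neg h, dif_pos hS]
      have h1 : s < nextChange f T i s := by
        rw [hns]
        exact (Finset.mem_filter.1 ((S.filter (fun u => s < u)).min'_mem hs')).2
      have h2 : nextChange f T i t ≤ s := by
        rw [hnt]; exact Finset.min'_le _ _ hs
      omega
  intro s hs t ht heq
  rw [Finset.mem_coe] at hs ht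
  rcases lt_trichotomy s t with h | h | h
  · exact absurd heq (key s t hs ht h)
  · exact h
  · exact absurd heq.symm (key t s ht hs h)

lemma key_count (E : Finset ℕ) (π : ℕ → ℕ) (β : ℕ → Prop)
    (hmap : ∀ t ∈ E, π t ∈ E) (hinj : Set.InjOn π ↑E)
    (hbal : (E.filter β).card = (E.filter (fun t => ¬ β t)).card) :
    (E.filter (fun t => β t ∧ β (π t))).card
      = (E.filter (fun t => ¬ β t ∧ ¬ β (π t))).card := by
  classical
  have himg : E.image π = E := by
    apply Finset.eq_of_subset_of_card_le
    · intro x hx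
      obtain ⟨t, ht, rfl⟩ := Finset.mem_image.1 hx
      exact hmap t ht
    · rw [Finset.card_image_of_injOn hinj]
  have hπβ : (E.filter (fun t => β (π t))).card = (E.filter β).card := by
    rw [← Finset.card_image_of_injOn (hinj.mono (fun x hx =>
        Finset.mem_coe.2 (Finset.mem_of_mem_filter _ (Finset.mem_coe.1 hx))))]
    congr 1
    apply Finset.Subset.antisymm
    · intro x hx
      obtain ⟨t, ht, rfl⟩ := Finset.mem_image.1 hx
      obtain ⟨htE, hb⟩ := Finset.mem_filter.1 ht
      exact Finset.mem_filter.2 ⟨hmap t htE, hb⟩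
    · intro x hx
      obtain ⟨hxE, hb⟩ := Finset.mem_filter.1 hx
      obtain ⟨t, ht, rfl⟩ := Finset.mem_image.1 (himg ▸ hxE)
      exact Finset.mem_image_of_mem π (Finset.mem_filter.2 ⟨ht, hb⟩)
  have eC : ∀ (p q : ℕ → Prop), (E.filter (fun t => q t ∧ p t)).card
      + (E.filter (fun t => ¬ q t ∧ p t)).card = (E.filter p).card := by
    intro p q
    rw [show E.filter (fun t => q t ∧ p t) = (E.filter p).filter q from by
          ext x; simp [Finset.mem_filter]; tauto,
        show E.filter (fun t => ¬ q t ∧ p t) = (E.filter p).filter (fun t => ¬ q t) from by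
          ext x; simp [Finset.mem_filter]; tauto]
    exact Finset.card_filter_add_card_filter_not _
  have eB : ∀ (p q : ℕ → Prop), (E.filter (fun t => ¬ p t ∧ q t)).card
      + (E.filter (fun t => ¬ p t ∧ ¬ q t)).card = (E.filter (fun t => ¬ p t)).card := by
    intro p q
    rw [show E.filter (fun t => ¬ p t ∧ q t) = (E.filter (fun t => ¬ p t)).filter q from by
          ext x; simp [Finset.mem_filter]; tauto,
        show E.filter (fun t => ¬ p t ∧ ¬ q t)
            = (E.filter (fun t => ¬ p t)).filter (fun t => ¬ q t) from by
          ext x; simp [Finset.mem_filter]; tauto]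
    exact Finset.card_filter_add_card_filter_not _
  have h2 : (E.filter (fun t => β t ∧ β (π t))).card
      + (E.filter (fun t => ¬ β t ∧ β (π t))).card = (E.filter (fun t => β (π t))).card :=
    eC (fun t => β (π t)) β
  have h3 : (E.filter (fun t => ¬ β t ∧ β (π t))).card
      + (E.filter (fun t => ¬ β t ∧ ¬ β (π t))).card = (E.filter (fun t => ¬ β t)).card :=
    eB β (fun t => β (π t))
  omega

lemma card_filter_congr {s : Finset ℕ} {p q : ℕ → Prop} [DecidablePred p] [DecidablePred q]
    (h : ∀ t ∈ s, p t ↔ q t) : (s.filter p).card = (s.filter q).card := by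
  rw [Finset.filter_congr h]

lemma main_aux (SA SB : Finset ℕ) (nA nB : ℕ → ℕ) (α : ℕ → Prop) (T : ℕ)
    (hdisj : Disjoint SA SB)
    (hAmem : ∀ t ∈ SA, nA t ∈ SA) (hBmem : ∀ t ∈ SB, nB t ∈ SB)
    (hAinj : Set.InjOn nA ↑SA) (hBinj : Set.InjOn nB ↑SB)
    (hEchar : ∀ t, t ∈ SA ∪ SB ↔ t < T ∧ ¬ (α (t+1) ↔ α t))
    (h0T : α 0 ↔ α T) :
    (SA.filter (fun t => α t ∧ α (nA t))).card
      + (SB.filter (fun t => α t ∧ α (nB t))).card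
    = (SA.filter (fun t => ¬ α t ∧ ¬ α (nA t))).card
      + (SB.filter (fun t => ¬ α t ∧ ¬ α (nB t))).card := by
  classical
  set E := SA ∪ SB with hE
  set π : ℕ → ℕ := fun t => if t ∈ SA then nA t else nB t with hπ
  have hπA : ∀ t ∈ SA, π t = nA t := fun t ht => by rw [hπ]; simp [ht]
  have hπB : ∀ t ∈ SB, π t = nB t := fun t ht => by
    rw [hπ]; simp [Finset.disjoint_right.1 hdisj ht]
  have hmap : ∀ t ∈ E, π t ∈ E := by
    intro t ht
    by_cases h : t ∈ SA
    · exact Finset.mem_union_left _ (by rw [hπA t h]; exact hAmem t h)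
    · rcases Finset.mem_union.1 ht with h' | h'
      · exact absurd h' h
      · exact Finset.mem_union_right _ (by rw [hπB t h']; exact hBmem t h')
  have hinj : Set.InjOn π ↑E := by
    intro s hs t ht heq
    rw [Finset.mem_coe, Finset.mem_union] at hs ht
    by_cases hsA : s ∈ SA <;> by_cases htA : t ∈ SA
    · exact hAinj hsA htA (by rwa [hπA s hsA, hπA t htA] at heq)
    · exfalso
      have htB : t ∈ SB := ht.resolve_left htA
      rw [hπA s hsA, hπB t htB] at heq
      have h1 : nA s ∈ SA := hAmem s hsA
      rw [heq] at h1
      exact Finset.disjoint_left.1 hdisj h1 (hBmem t htB)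
    · exfalso
      have hsB : s ∈ SB := hs.resolve_left hsA
      rw [hπB s hsB, hπA t htA] at heq
      have h1 : nA t ∈ SA := hAmem t htA
      rw [← heq] at h1
      exact Finset.disjoint_left.1 hdisj h1 (hBmem s hsB)
    · have hsB : s ∈ SB := hs.resolve_left hsA
      have htB : t ∈ SB := ht.resolve_left htA
      exact hBinj hsB htB (by rwa [hπB s hsB, hπB t htB] at heq)
  have hEt : E = (Finset.range T).filter (fun t => ¬ (α (t+1) ↔ α t)) := by
    ext t
    rw [hEchar t, Finset.mem_filter, Finset.mem_range]
  have hbal : (E.filter α).card = (E.filter (fun t => ¬ α t)).card := by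
    have hd : E.filter α = (Finset.range T).filter (fun t => α t ∧ ¬ α (t+1)) := by
      rw [hEt]
      ext t
      simp only [Finset.mem_filter, Finset.mem_range]
      tauto
    have hu : E.filter (fun t => ¬ α t)
        = (Finset.range T).filter (fun t => ¬ α t ∧ α (t+1)) := by
      rw [hEt]
      ext t
      simp only [Finset.mem_filter, Finset.mem_range]
      tauto
    have htr := transitions α T
    have hite : (if α T then 1 else 0) = (if α 0 then 1 else 0) := by
      by_cases h : α 0
      · rw [if_pos h, if_pos (h0T.1 h)]
      · rw [if_neg h, if_neg (fun h' => h (h0T.2 h'))]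
    rw [hd, hu]
    omega
  have key := key_count E π α hmap hinj hbal
  have c1 : (E.filter (fun t => α t ∧ α (π t))).card
      = (SA.filter (fun t => α t ∧ α (nA t))).card
        + (SB.filter (fun t => α t ∧ α (nB t))).card := by
    rw [hE, Finset.filter_union,
      Finset.card_union_of_disjoint (Finset.disjoint_filter_filter hdisj)]
    congr 1
    · refine card_filter_congr (fun t ht => ?_)
      rw [hπA t ht]
    · refine card_filter_congr (fun t ht => ?_)
      rw [hπB t ht]
  have c2 : (E.filter (fun t => ¬ α t ∧ ¬ α (π t))).card
      = (SA.filter (fun t => ¬ α t ∧ ¬ α (nA t))).card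
        + (SB.filter (fun t => ¬ α t ∧ ¬ α (nB t))).card := by
    rw [hE, Finset.filter_union,
      Finset.card_union_of_disjoint (Finset.disjoint_filter_filter hdisj)]
    congr 1
    · refine card_filter_congr (fun t ht => ?_)
      rw [hπA t ht]
    · refine card_filter_congr (fun t ht => ?_)
      rw [hπB t ht]
  rw [← c1, ← c2]
  exact key

/-- Pair-counting lemma: in a cyclic loop of strict improvement steps of a two-resource
spatial congestion game, for adjacent players `A` and `B`, the number of times they appear
in each other's same-same (`SS`) sets over all pairs of successive reverse changes equals
the number of times they appear in each other's opposite-opposite (`OO`) sets. -/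
theorem pair_counting {ι : Type*} [Fintype ι] (G : SimpleGraph ι)
    (g : ι → Bool → ℕ → ℤ) (hg : ∀ i r, Antitone (g i r))
    (T : ℕ) (f : ℕ → ι → Bool) (hT : 0 < T) (hcyc : f 0 = f T)
    (hstep : ∀ t < T, Improves G g (f t) (f (t + 1)))
    (A B : ι) (hAB : G.Adj A B) :
    ((changeTimes f T A).filter (fun t =>
        f t B = f t A ∧
        f (nextChange f T A t) B = f (nextChange f T A t) A)).card +
    ((changeTimes f T B).filter (fun t =>
        f t A = f t B ∧
        f (nextChange f T B t) A = f (nextChange f T B t) B)).card =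
    ((changeTimes f T A).filter (fun t =>
        f t B ≠ f t A ∧
        f (nextChange f T A t) B ≠ f (nextChange f T A t) A)).card +
    ((changeTimes f T B).filter (fun t =>
        f t A ≠ f t B ∧
        f (nextChange f T B t) A ≠ f (nextChange f T B t) B)).card := by
  classical
  have hABne : A ≠ B := hAB.ne
  have hcase : ∀ t, t < T → (f (t+1) A = f t A ∧ f (t+1) B = f t B) ∨
      (f (t+1) A ≠ f t A ∧ f (t+1) B = f t B) ∨
      (f (t+1) A = f t A ∧ f (t+1) B ≠ f t B) := by
    intro t ht
    obtain ⟨i, hi, -⟩ := hstep t ht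
    by_cases hA : f (t+1) A = f t A
    · by_cases hB : f (t+1) B = f t B
      · exact Or.inl ⟨hA, hB⟩
      · exact Or.inr (Or.inr ⟨hA, hB⟩)
    · by_cases hB : f (t+1) B = f t B
      · exact Or.inr (Or.inl ⟨hA, hB⟩)
      · exfalso
        have h1 : A = i := by by_contra h; exact hA (hi A h)
        have h2 : B = i := by by_contra h; exact hB (hi B h)
        exact hABne (h1.trans h2.symm)
  have hmemA : ∀ t, t ∈ changeTimes f T A ↔ t < T ∧ f (t+1) A ≠ f t A := by
    intro t
    rw [changeTimes, Finset.mem_filter, Finset.mem_range]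
  have hmemB : ∀ t, t ∈ changeTimes f T B ↔ t < T ∧ f (t+1) B ≠ f t B := by
    intro t
    rw [changeTimes, Finset.mem_filter, Finset.mem_range]
  have hdisj : Disjoint (changeTimes f T A) (changeTimes f T B) := by
    rw [Finset.disjoint_left]
    intro t htA htB
    rw [hmemA] at htA
    rw [hmemB] at htB
    rcases hcase t htA.1 with ⟨h1, h2⟩ | ⟨h1, h2⟩ | ⟨h1, h2⟩
    · exact htA.2 h1
    · exact htB.2 h2
    · exact htA.2 h1
  have hEchar : ∀ t, t ∈ changeTimes f T A ∪ changeTimes f T B ↔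
      t < T ∧ ¬ ((f (t+1) B = f (t+1) A) ↔ (f t B = f t A)) := by
    intro t
    constructor
    · intro ht
      rcases Finset.mem_union.1 ht with h | h
      · rw [hmemA] at h
        exact ⟨h.1, by
          rcases hcase t h.1 with ⟨h1, h2⟩ | ⟨h1, h2⟩ | ⟨h1, h2⟩
          · exact absurd h1 h.2
          · exact bool_flip1 _ _ _ _ h1 h2
          · exact absurd h1 h.2⟩
      · rw [hmemB] at h
        exact ⟨h.1, by
          rcases hcase t h.1 with ⟨h1, h2⟩ | ⟨h1, h2⟩ | ⟨h1, h2⟩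
          · exact absurd h2 h.2
          · exact absurd h2 h.2
          · exact bool_flip2 _ _ _ _ h1 h2⟩
    · rintro ⟨htT, hflip⟩
      rcases hcase t htT with ⟨h1, h2⟩ | ⟨h1, h2⟩ | ⟨h1, h2⟩
      · exact absurd (bool_same _ _ _ _ h1 h2) hflip
      · exact Finset.mem_union_left _ ((hmemA t).2 ⟨htT, h1⟩)
      · exact Finset.mem_union_right _ ((hmemB t).2 ⟨htT, h2⟩)
  have h0T : (f 0 B = f 0 A) ↔ (f T B = f T A) := by rw [hcyc]
  have H := main_aux (changeTimes f T A) (changeTimes f T B)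
      (nextChange f T A) (nextChange f T B) (fun t => f t B = f t A) T
      hdisj (fun t ht => nextChange_mem f T A ht) (fun t ht => nextChange_mem f T B ht)
      (nextChange_injOn f T A) (nextChange_injOn f T B) hEchar h0T
  refine Eq.trans (Eq.trans ?_ H) ?_
  · congr 1
    · congr 1
      ext t
      simp only [Finset.mem_filter]
    · congr 1
      ext t
      simp only [Finset.mem_filter]
      constructor <;> rintro ⟨h1, h2, h3⟩ <;> exact ⟨h1, h2.symm, h3.symm⟩
  · congr 1
    · congr 1
      ext t
      simp only [Finset.mem_filter]
    · congr 1
      ext t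
      simp only [Finset.mem_filter]
      constructor <;> rintro ⟨h1, h2, h3⟩ <;>
        exact ⟨h1, fun h => h2 h.symm, fun h => h3 h.symm⟩
end
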